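/- Let 0 < α < 2 and define k(z,x) = e^{i⟨z,x⟩} − 1 − i·1_{‖x‖≤1}(x)·⟨z,x⟩ for z, x ∈ ℝ². Then for every z ∈ ℝ², Re ∫_{ℝ²} k(z,x) ‖x‖^{−2−α} dx = c₀ c₁ ‖z‖^α, where c₀ = ∫₀^∞ (cos r − 1) r^{−1−α} dr and c₁ = ∫₀^{2π} |cos s|^α ds (and the imaginary part vanishes by symmetry). -/

import Mathlib

/-!
The integrand is bounded by `C min(‖x‖², 1) ‖x‖^(-2-α)`, integrable near `0` because `α < 2`
and at infinity because `0 < α`. The imaginary part vanishes because `k(z, -x)` is the conjugate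
of `k(z, x)`. For the real part, a rotation reduces to `z = ‖z‖ e₁`; in polar coordinates
`x = r e^{iθ}` the radial integral of `(cos (‖z‖ r cos θ) - 1) r^(-1-α)` is
`c₀ |‖z‖ cos θ|^α` by scaling, and integrating over `θ` produces `c₁`.
-/

open MeasureTheory Set

lemma norm_exp_I_mul_ofReal_sub_one_sub_le (b : ℝ) :
    ‖Complex.exp (Complex.I * b) - 1 - Complex.I * b‖ ≤ 2 * b ^ 2 := by
  rcases le_or_gt |b| 1 with hb | hb
  · have hIb : ‖Complex.I * b‖ = |b| := by simp
    calc _ ≤ ‖Complex.I * b‖ ^ 2 := Complex.norm_exp_sub_one_sub_id_le (hIb.trans_le hb)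
      _ ≤ 2 * b ^ 2 := by rw [hIb, sq_abs]; nlinarith [sq_nonneg b]
  · calc _ ≤ ‖Complex.exp (Complex.I * b) - 1‖ + ‖Complex.I * b‖ := norm_sub_le _ _
      _ ≤ |b| + |b| := by
          gcongr
          · exact Real.norm_exp_I_mul_ofReal_sub_one_le
          · simp
      _ ≤ 2 * b ^ 2 := by nlinarith [sq_abs b]

lemma norm_exp_I_mul_ofReal_sub_one_le_two (b : ℝ) : ‖Complex.exp (Complex.I * b) - 1‖ ≤ 2 :=
  (norm_sub_le _ _).trans (by rw [Complex.norm_exp_I_mul_ofReal, norm_one]; norm_num)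

lemma integrableOn_Ioi_ite_sq_mul_rpow {α : ℝ} (hα : 0 < α) (hα2 : α < 2) (C D : ℝ) :
    IntegrableOn (fun r : ℝ ↦ (if r ≤ 1 then C * r ^ 2 else D) * r ^ (-1 - α)) (Ioi 0) := by
  rw [← Ioc_union_Ioi_eq_Ioi zero_le_one]
  refine IntegrableOn.union ?_ ?_
  · have h : IntegrableOn (fun r : ℝ ↦ C * r ^ (1 - α)) (Ioc 0 1) :=
      ((intervalIntegrable_iff_integrableOn_Ioc_of_le zero_le_one).1
        (intervalIntegral.intervalIntegrable_rpow' (by linarith))).const_mul C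
    refine h.congr_fun (fun r hr ↦ ?_) measurableSet_Ioc
    rw [if_pos hr.2, mul_assoc, ← Real.rpow_two, ← Real.rpow_add hr.1]
    ring_nf
  · refine IntegrableOn.congr_fun (((integrableOn_Ioi_rpow_of_lt (a := -1 - α) (by linarith)
      zero_lt_one).const_mul D)) (fun r hr ↦ ?_) measurableSet_Ioi
    simp [not_le.2 (mem_Ioi.1 hr)]

lemma im_integral_eq_zero_of_neg_eq_conj {G : Type*} [AddGroup G]
    [MeasurableSpace G] [MeasurableNeg G] (μ : Measure G) [μ.IsNegInvariant] {f : G → ℂ}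
    (hf : ∀ x, f (-x) = starRingEnd ℂ (f x)) : (∫ x, f x ∂μ).im = 0 := by
  have h : starRingEnd ℂ (∫ x, f x ∂μ) = ∫ x, f x ∂μ := by
    rw [← integral_conj, ← integral_neg_eq_self f μ]
    simp_rw [hf]
  exact Complex.conj_eq_iff_im.1 h

noncomputable def levyKernel {E : Type*} [NormedAddCommGroup E] [InnerProductSpace ℝ E]
    (z x : E) : ℂ :=
  Complex.exp (Complex.I * ((inner ℝ z x : ℝ) : ℂ)) - 1 -
    Complex.I * (if ‖x‖ ≤ 1 then ((inner ℝ z x : ℝ) : ℂ) else 0)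

section levyKernel

variable {E : Type*} [NormedAddCommGroup E] [InnerProductSpace ℝ E]

lemma levyKernel_neg (z x : E) : levyKernel z (-x) = starRingEnd ℂ (levyKernel z x) := by
  simp only [levyKernel, inner_neg_right, norm_neg, Complex.ofReal_neg, map_sub, map_mul,
    Complex.conj_I, map_one, ← Complex.exp_conj, Complex.conj_ofReal]
  split_ifs <;> simp

lemma re_levyKernel_mul_ofReal (z x : E) (c : ℝ) :
    (levyKernel z x * c).re = (Real.cos (inner ℝ z x) - 1) * c := by
  rw [levyKernel, mul_comm Complex.I, Complex.exp_mul_I]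
  split_ifs <;> simp [Complex.cos_ofReal_re]

lemma norm_levyKernel_le (z x : E) :
    ‖levyKernel z x‖ ≤ if ‖x‖ ≤ 1 then 2 * ‖z‖ ^ 2 * ‖x‖ ^ 2 else 2 := by
  unfold levyKernel
  split_ifs with hx
  · calc _ ≤ 2 * (inner ℝ z x) ^ 2 := norm_exp_I_mul_ofReal_sub_one_sub_le _
      _ ≤ 2 * (‖z‖ * ‖x‖) ^ 2 := by
          refine mul_le_mul_of_nonneg_left ?_ zero_le_two
          exact sq_le_sq' (abs_le.1 (abs_real_inner_le_norm z x)).1 (real_inner_le_norm z x)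
      _ = _ := by ring
  · simpa using norm_exp_I_mul_ofReal_sub_one_le_two _

@[fun_prop]
lemma measurable_levyKernel [MeasurableSpace E] [OpensMeasurableSpace E] (z : E) :
    Measurable (levyKernel z) := by
  unfold levyKernel
  refine Measurable.sub (by fun_prop) (Measurable.const_mul ?_ _)
  exact Measurable.ite (measurableSet_le (by fun_prop) (by fun_prop)) (by fun_prop) (by fun_prop)

end levyKernel

lemma integrable_levyKernel_mul_rpow {E : Type*} [NormedAddCommGroup E] [InnerProductSpace ℝ E]
    [FiniteDimensional ℝ E] [Nontrivial E] [MeasurableSpace E] [BorelSpace E]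
    (μ : Measure E) [μ.IsAddHaarMeasure] {α : ℝ} (hα : 0 < α) (hα2 : α < 2) (z : E) :
    Integrable (fun x ↦ levyKernel z x *
      ((‖x‖ ^ (-(Module.finrank ℝ E : ℝ) - α) : ℝ) : ℂ)) μ := by
  set d := Module.finrank ℝ E
  have hd : 0 < d := Module.finrank_pos
  set G : ℝ → ℝ := fun r ↦ (if r ≤ 1 then 2 * ‖z‖ ^ 2 * r ^ 2 else 2) * r ^ (-(d : ℝ) - α)
  have hG : Integrable (fun x ↦ G ‖x‖) μ := by
    refine (integrable_fun_norm_addHaar μ).2 <|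
      (integrableOn_Ioi_ite_sq_mul_rpow hα hα2 (2 * ‖z‖ ^ 2) 2).congr_fun (fun r hr ↦ ?_)
        measurableSet_Ioi
    have hpow : r ^ (d - 1) * r ^ (-(d : ℝ) - α) = r ^ (-1 - α) := by
      rw [← Real.rpow_natCast, Nat.cast_sub hd, ← Real.rpow_add hr]
      ring_nf
    simp only [G, smul_eq_mul]
    rw [mul_left_comm, hpow]
  refine hG.mono' ?_ (Filter.Eventually.of_forall fun x ↦ ?_)
  · fun_prop
  · rw [norm_mul, Complex.norm_real, Real.norm_of_nonneg (by positivity)]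
    exact mul_le_mul_of_nonneg_right (norm_levyKernel_le z x) (by positivity)

lemma integral_inner_norm_complex_eq {F : Type*} [NormedAddCommGroup F] [NormedSpace ℝ F]
    (g : ℝ → ℝ → F) (w : ℂ) :
    ∫ x : ℂ, g (inner ℝ w x) ‖x‖ = ∫ x : ℂ, g (‖w‖ * x.re) ‖x‖ := by
  set u := Circle.exp (Complex.arg w)
  have hw : starRingEnd ℂ w * u = ‖w‖ := by
    have hwu : w = ‖w‖ * u := (Complex.norm_mul_exp_arg_mul_I w).symm
    nth_rewrite 1 [hwu]
    rw [map_mul, Complex.conj_ofReal, mul_assoc, Complex.conj_mul', Circle.norm_coe]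
    simp
  have hinner : ∀ x : ℂ, inner ℝ w (rotation u x) = ‖w‖ * x.re := fun x ↦ by
    rw [Complex.inner, rotation_apply, mul_comm, ← mul_assoc, hw, Complex.re_ofReal_mul]
  rw [← (rotation u).measurePreserving.integral_comp
    (rotation u).toHomeomorph.measurableEmbedding]
  simp_rw [hinner, LinearIsometryEquiv.norm_map]

lemma integral_inner_norm_euclideanSpace_eq {F : Type*} [NormedAddCommGroup F]
    [NormedSpace ℝ F] (g : ℝ → ℝ → F) (z : EuclideanSpace ℝ (Fin 2)) :
    ∫ x, g (inner ℝ z x) ‖x‖ = ∫ x : ℂ, g (‖z‖ * x.re) ‖x‖ := by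
  set e := Complex.orthonormalBasisOneI.repr
  rw [← e.measurePreserving.integral_comp e.toHomeomorph.measurableEmbedding,
    ← e.symm.norm_map z, ← integral_inner_norm_complex_eq]
  simp_rw [LinearIsometryEquiv.norm_map, ← e.inner_map_map, e.apply_symm_apply]

lemma integral_cos_mul_sub_one_mul_rpow {α : ℝ} (hα : 0 < α) (b : ℝ) :
    ∫ r in Ioi (0 : ℝ), (Real.cos (b * r) - 1) * r ^ (-1 - α) =
      |b| ^ α * ∫ r in Ioi (0 : ℝ), (Real.cos r - 1) * r ^ (-1 - α) := by
  rcases eq_or_ne b 0 with rfl | hb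
  · simp [Real.zero_rpow hα.ne']
  have hb' : 0 < |b| := abs_pos.2 hb
  have hscale : ∀ r ∈ Ioi (0 : ℝ), (Real.cos (b * r) - 1) * r ^ (-1 - α) =
      |b| ^ (1 + α) * ((Real.cos (|b| * r) - 1) * (|b| * r) ^ (-1 - α)) := fun r hr ↦ by
    rw [← Real.cos_abs, abs_mul, abs_of_pos (mem_Ioi.1 hr), Real.mul_rpow hb'.le (mem_Ioi.1 hr).le]
    have : |b| ^ (1 + α) * |b| ^ (-1 - α) = 1 := by
      rw [← Real.rpow_add hb']; norm_num
    linear_combination (Real.cos (|b| * r) - 1) * r ^ (-1 - α) * this.symm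
  rw [setIntegral_congr_fun measurableSet_Ioi hscale, integral_const_mul,
    integral_comp_mul_left_Ioi (fun r ↦ (Real.cos r - 1) * r ^ (-1 - α)) 0 hb', mul_zero,
    smul_eq_mul, Real.rpow_add hb', Real.rpow_one]
  field_simp

open Real in
lemma integrableOn_cos_mul_sub_one_mul_rpow_prod {α : ℝ} (hα : 0 < α) (hα2 : α < 2) (t : ℝ) :
    IntegrableOn (fun p : ℝ × ℝ ↦ (cos (t * cos p.2 * p.1) - 1) * p.1 ^ (-1 - α))
      (Ioi 0 ×ˢ Ioo (-π) π) := by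
  have hbound : IntegrableOn
      (fun p : ℝ × ℝ ↦ (if p.1 ≤ 1 then t ^ 2 / 2 * p.1 ^ 2 else 2) * p.1 ^ (-1 - α) * 1)
      (Ioi 0 ×ˢ Ioo (-π) π) := by
    rw [IntegrableOn, Measure.volume_eq_prod, ← Measure.prod_restrict]
    exact (integrableOn_Ioi_ite_sq_mul_rpow hα hα2 _ _).mul_prod
      (integrableOn_const measure_Ioo_lt_top.ne)
  refine hbound.mono' (by fun_prop) <| (ae_restrict_iff' (measurableSet_Ioi.prod
    measurableSet_Ioo)).2 (Filter.Eventually.of_forall fun p ⟨(hr : 0 < p.1), _⟩ ↦ ?_)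
  rw [norm_mul, mul_one, Real.norm_of_nonneg (Real.rpow_nonneg hr.le _)]
  refine mul_le_mul_of_nonneg_right ?_ (Real.rpow_nonneg hr.le _)
  rw [Real.norm_eq_abs, abs_sub_comm, abs_of_nonneg (sub_nonneg.2 (cos_le_one _))]
  split_ifs
  · have : (t * cos p.2 * p.1) ^ 2 ≤ t ^ 2 * p.1 ^ 2 := by
      rw [show (t * cos p.2 * p.1) ^ 2 = t ^ 2 * p.1 ^ 2 * cos p.2 ^ 2 by ring]
      exact mul_le_of_le_one_right (by positivity) (cos_sq_le_one _)
    linarith [one_sub_sq_div_two_le_cos (x := t * cos p.2 * p.1)]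
  · linarith [neg_one_le_cos (t * cos p.2 * p.1)]

open Real in
lemma integral_cos_mul_re_sub_one_mul_rpow {α : ℝ} (hα : 0 < α) (hα2 : α < 2) {t : ℝ}
    (ht : 0 ≤ t) :
    ∫ x : ℂ, (cos (t * x.re) - 1) * ‖x‖ ^ (-2 - α) =
      ((∫ r in Ioi (0 : ℝ), (cos r - 1) * r ^ (-1 - α)) *
        ∫ s in (0 : ℝ)..(2 * π), |cos s| ^ α) * t ^ α := by
  have hpolar : EqOn (fun p : ℝ × ℝ ↦ p.1 • ((cos (t * (Complex.polarCoord.symm p).re) - 1) *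
        ‖Complex.polarCoord.symm p‖ ^ (-2 - α)))
      (fun p ↦ (cos (t * cos p.2 * p.1) - 1) * p.1 ^ (-1 - α)) (Ioi 0 ×ˢ Ioo (-π) π) :=
    fun p ⟨(hr : 0 < p.1), _⟩ ↦ by
      have hre : (Complex.polarCoord.symm p).re = p.1 * cos p.2 := by
        simp [Complex.polarCoord_symm_apply, Complex.cos_ofReal_re, Complex.sin_ofReal_re]
      dsimp only
      rw [smul_eq_mul, hre, Complex.norm_polarCoord_symm, abs_of_pos hr,
        show -1 - α = 1 + (-2 - α) by ring, Real.rpow_add hr, Real.rpow_one]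
      ring_nf
  have hperiodic : ∫ θ in Ioo (-π) π, |cos θ| ^ α = ∫ s in (0 : ℝ)..(2 * π), |cos s| ^ α := by
    have hper : Function.Periodic (fun s ↦ |cos s| ^ α) (2 * π) := fun s ↦ by
      simp [cos_add_two_pi]
    have hshift := hper.intervalIntegral_add_eq (-π) 0
    rw [show -π + 2 * π = π by ring, zero_add] at hshift
    rw [← integral_Ioc_eq_integral_Ioo, ← intervalIntegral.integral_of_le (by linarith [pi_pos]),
      hshift]
  have hint := integrableOn_cos_mul_sub_one_mul_rpow_prod hα hα2 t
  rw [IntegrableOn, Measure.volume_eq_prod, ← Measure.prod_restrict] at hint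
  rw [← Complex.integral_comp_polarCoord_symm, polarCoord_target,
    setIntegral_congr_fun (measurableSet_Ioi.prod measurableSet_Ioo) hpolar,
    Measure.volume_eq_prod, ← Measure.prod_restrict, integral_prod_symm _ hint]
  simp_rw [integral_cos_mul_sub_one_mul_rpow hα, abs_mul, abs_of_nonneg ht,
    Real.mul_rpow ht (abs_nonneg _)]
  rw [integral_mul_const, integral_const_mul, hperiodic]
  ring

theorem stmt_3 (α : ℝ) (hα : 0 < α) (hα2 : α < 2) (z : EuclideanSpace ℝ (Fin 2)) :
    (∫ x : EuclideanSpace ℝ (Fin 2),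
        (Complex.exp (Complex.I * ((inner ℝ z x : ℝ) : ℂ)) - 1 -
            Complex.I * (if ‖x‖ ≤ 1 then ((inner ℝ z x : ℝ) : ℂ) else 0)) *
          ((‖x‖ ^ (-2 - α) : ℝ) : ℂ)).re =
      ((∫ r in Ioi (0:ℝ), (Real.cos r - 1) * r ^ (-1 - α)) *
          (∫ s in (0:ℝ)..(2 * Real.pi), |Real.cos s| ^ α)) * ‖z‖ ^ α ∧
    (∫ x : EuclideanSpace ℝ (Fin 2),
        (Complex.exp (Complex.I * ((inner ℝ z x : ℝ) : ℂ)) - 1 -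
            Complex.I * (if ‖x‖ ≤ 1 then ((inner ℝ z x : ℝ) : ℂ) else 0)) *
          ((‖x‖ ^ (-2 - α) : ℝ) : ℂ)).im = 0 := by
  change (∫ x, levyKernel z x * ((‖x‖ ^ (-2 - α) : ℝ) : ℂ)).re = _ ∧
    (∫ x, levyKernel z x * ((‖x‖ ^ (-2 - α) : ℝ) : ℂ)).im = 0
  have hint := integrable_levyKernel_mul_rpow volume hα hα2 z
  rw [finrank_euclideanSpace_fin] at hint
  refine ⟨?_, im_integral_eq_zero_of_neg_eq_conj volume fun x ↦ ?_⟩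
  · rw [← RCLike.re_to_complex, ← integral_re (by exact_mod_cast hint)]
    simp_rw [RCLike.re_to_complex, re_levyKernel_mul_ofReal]
    rw [integral_inner_norm_euclideanSpace_eq (fun s r ↦ (Real.cos s - 1) * r ^ (-2 - α)),
      integral_cos_mul_re_sub_one_mul_rpow hα hα2 (norm_nonneg z)]
  · rw [levyKernel_neg, norm_neg, map_mul, Complex.conj_ofReal]
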